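/- Let f : ℝᵈ → ℝ be differentiable with L-Lipschitz gradient, bounded below by f_*, and satisfying the Polyak–Łojasiewicz inequality (1/2)‖∇f(x)‖² ≥ μ(f(x) − f_*) for all x. Consider SGD iterates x_{k+1} = x_k − α g_k, where E[g_k | x_k] = ∇f(x_k) and E[‖g_k‖² | x_k] ≤ C, with constant stepsize 0 < α < 1/(2μ) and α ≤ 1/L. Then E[f(x_k) − f_*] ≤ (1 − 2μα)^k (f(x_0) − f_*) + LαC/(4μ). -/

import Mathlib

open MeasureTheory

section Aux

lemma sgd_grad_apply {d : ℕ} (f : EuclideanSpace ℝ (Fin d) → ℝ) (z w : EuclideanSpace ℝ (Fin d)) :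
    (fderiv ℝ f z) w = inner (𝕜 := ℝ) (gradient f z) w := by
  rw [gradient, InnerProductSpace.toDual_symm_apply]

lemma sgd_descent_lemma {d : ℕ} {f : EuclideanSpace ℝ (Fin d) → ℝ} {L : ℝ} (hL : 0 ≤ L)
    (hdiff : Differentiable ℝ f) (hLip : LipschitzWith (Real.toNNReal L) (gradient f))
    (x y : EuclideanSpace ℝ (Fin d)) :
    f y ≤ f x + inner (𝕜 := ℝ) (gradient f x) (y - x) + L / 2 * ‖y - x‖ ^ 2 := by
  set v := y - x with hv
  have key : ∀ t : ℝ, HasDerivAt (fun s => f (x + s • v))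
      (inner (𝕜 := ℝ) (gradient f (x + t • v)) v) t := by
    intro t
    have h1 : HasDerivAt (fun s : ℝ => x + s • v) v t := by
      simpa using ((hasDerivAt_id t).smul_const v).const_add x
    have h2 := (hdiff (x + t • v)).hasFDerivAt.comp_hasDerivAt t h1
    rw [← sgd_grad_apply]; exact h2
  have hcontpath : Continuous fun t : ℝ => x + t • v :=
    continuous_const.add (continuous_id.smul continuous_const)
  have hcont : Continuous fun t : ℝ => inner (𝕜 := ℝ) (gradient f (x + t • v)) v :=
    ((hLip.continuous.comp hcontpath).inner continuous_const)
  have hcont2 : Continuous fun t : ℝ => inner (𝕜 := ℝ) (gradient f x) v + L * t * ‖v‖ ^ 2 :=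
    continuous_const.add ((continuous_const.mul continuous_id).mul continuous_const)
  have hftc : ∫ t in (0:ℝ)..1, inner (𝕜 := ℝ) (gradient f (x + t • v)) v = f y - f x := by
    rw [intervalIntegral.integral_eq_sub_of_hasDerivAt (fun t _ => key t)
      (hcont.intervalIntegrable 0 1)]
    simp [hv]
  have hbound : ∀ t ∈ Set.Icc (0:ℝ) 1,
      inner (𝕜 := ℝ) (gradient f (x + t • v)) v ≤
        inner (𝕜 := ℝ) (gradient f x) v + L * t * ‖v‖ ^ 2 := by
    intro t ht
    have h1 : inner (𝕜 := ℝ) (gradient f (x + t • v)) v - inner (𝕜 := ℝ) (gradient f x) v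
        = inner (𝕜 := ℝ) (gradient f (x + t • v) - gradient f x) v := by
      rw [inner_sub_left]
    have h2 : ‖gradient f (x + t • v) - gradient f x‖ ≤ L * t * ‖v‖ := by
      have h := hLip.dist_le_mul (x + t • v) x
      rw [dist_eq_norm, dist_eq_norm] at h
      simp only [add_sub_cancel_left] at h
      calc ‖gradient f (x + t • v) - gradient f x‖ ≤ (Real.toNNReal L : ℝ) * ‖t • v‖ := h
        _ = L * (|t| * ‖v‖) := by rw [Real.coe_toNNReal L hL, norm_smul]; simp
        _ = L * t * ‖v‖ := by rw [abs_of_nonneg ht.1]; ring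
    have h3 : inner (𝕜 := ℝ) (gradient f (x + t • v) - gradient f x) v ≤ L * t * ‖v‖ * ‖v‖ :=
      le_trans (real_inner_le_norm _ _)
        (mul_le_mul_of_nonneg_right h2 (norm_nonneg _))
    nlinarith [h3, h1]
  have hint : ∫ t in (0:ℝ)..1, (inner (𝕜 := ℝ) (gradient f x) v + L * t * ‖v‖ ^ 2)
      = inner (𝕜 := ℝ) (gradient f x) v + L / 2 * ‖v‖ ^ 2 := by
    have : (fun t : ℝ => inner (𝕜 := ℝ) (gradient f x) v + L * t * ‖v‖ ^ 2)
        = fun t : ℝ => inner (𝕜 := ℝ) (gradient f x) v + (L * ‖v‖ ^ 2) * t := by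
      funext t; ring
    rw [this, intervalIntegral.integral_add intervalIntegrable_const
      (by exact (continuous_const.mul continuous_id).intervalIntegrable 0 1),
      intervalIntegral.integral_const_mul, integral_id]
    simp; ring
  have hmono : ∫ t in (0:ℝ)..1, inner (𝕜 := ℝ) (gradient f (x + t • v)) v ≤
      ∫ t in (0:ℝ)..1, (inner (𝕜 := ℝ) (gradient f x) v + L * t * ‖v‖ ^ 2) :=
    intervalIntegral.integral_mono_on (by norm_num) (hcont.intervalIntegrable 0 1)
      (hcont2.intervalIntegrable 0 1) hbound
  rw [hftc, hint] at hmono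
  linarith

lemma sgd_condexp_clm_comm {Ω : Type*} {m m0 : MeasurableSpace Ω} {P : Measure Ω}
    [IsFiniteMeasure P] (hm : m ≤ m0)
    {E F : Type*} [NormedAddCommGroup E] [NormedSpace ℝ E] [CompleteSpace E]
    [NormedAddCommGroup F] [NormedSpace ℝ F] [CompleteSpace F]
    (T : E →L[ℝ] F) {u : Ω → E} (hu : Integrable u P) :
    (fun ω => T ((P[u|m]) ω)) =ᵐ[P] P[fun ω => T (u ω)|m] := by
  haveI : SigmaFinite (P.trim hm) := inferInstance
  refine ae_eq_condExp_of_forall_setIntegral_eq hm (T.integrable_comp hu) ?_ ?_ ?_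
  · intro s _ _
    exact (T.integrable_comp integrable_condExp).integrableOn
  · intro s hs hμs
    rw [T.integral_comp_comm integrable_condExp.integrableOn,
      setIntegral_condExp hm hu hs, T.integral_comp_comm hu.integrableOn]
  · exact StronglyMeasurable.aestronglyMeasurable
      (T.continuous.comp_stronglyMeasurable stronglyMeasurable_condExp)

lemma sgd_coord_abs_le_norm {d : ℕ} (z : EuclideanSpace ℝ (Fin d)) (i : Fin d) :
    |z i| ≤ ‖z‖ := by
  have h := EuclideanSpace.norm_eq z
  have h2 : |z i|^2 ≤ ∑ j, ‖z j‖^2 := by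
    have := Finset.single_le_sum (f := fun j => ‖z j‖^2) (fun j _ => by positivity)
      (Finset.mem_univ i)
    simpa [Real.norm_eq_abs, sq_abs] using this
  nlinarith [norm_nonneg z, abs_nonneg (z i),
    Real.sq_sqrt (show (0:ℝ) ≤ ∑ j, ‖z j‖^2 by positivity), h]

lemma sgd_norm_sq_eq_sum {d : ℕ} (z : EuclideanSpace ℝ (Fin d)) :
    ‖z‖ ^ 2 = ∑ i, (z i) * (z i) := by
  have h := EuclideanSpace.norm_eq z
  have : ‖z‖ ^ 2 = ∑ j, ‖z j‖^2 := by
    rw [h, Real.sq_sqrt (by positivity)]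
  rw [this]
  congr 1; funext j; rw [Real.norm_eq_abs, sq_abs, sq]

lemma sgd_inner_eq_sum {d : ℕ} (a b : EuclideanSpace ℝ (Fin d)) :
    inner (𝕜 := ℝ) a b = ∑ i, (a i) * (b i) := by
  rw [PiLp.inner_apply]
  simp [RCLike.inner_apply, conj_trivial]
  exact Finset.sum_congr rfl fun i _ => mul_comm _ _

end Aux

set_option maxHeartbeats 1000000 in
theorem sgd_pl_constant_stepsize (d : ℕ)
    (f : EuclideanSpace ℝ (Fin d) → ℝ) (L μ α C fstar : ℝ)
    (hL : 0 < L) (hμ : 0 < μ)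
    (hdiff : Differentiable ℝ f)
    (hLip : LipschitzWith (Real.toNNReal L) (gradient f))
    (hbelow : ∀ x, fstar ≤ f x)
    (hPL : ∀ x, μ * (f x - fstar) ≤ (1/2) * ‖gradient f x‖^2)
    (hα0 : 0 < α) (hα1 : α < 1 / (2 * μ)) (hα2 : α ≤ 1 / L)
    (Ω : Type*) [m0 : MeasurableSpace Ω] (P : Measure Ω) [IsProbabilityMeasure P]
    (ℱ : Filtration ℕ m0)
    (x g : ℕ → Ω → EuclideanSpace ℝ (Fin d))
    (x₀ : EuclideanSpace ℝ (Fin d))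
    (hx0 : x 0 = fun _ => x₀)
    (hadapted : Adapted ℱ x)
    (hupdate : ∀ k ω, x (k + 1) ω = x k ω - α • g k ω)
    (hL2 : ∀ k, MemLp (g k) 2 P)
    (hunbiased : ∀ k, P[g k | ℱ k] =ᵐ[P] fun ω => gradient f (x k ω))
    (hsecond : ∀ k, ∀ᵐ ω ∂P, (P[fun ω' => ‖g k ω'‖^2 | ℱ k]) ω ≤ C) :
    ∀ k : ℕ, ∫ ω, (f (x k ω) - fstar) ∂P ≤
      (1 - 2 * μ * α) ^ k * (f x₀ - fstar) + L * α * C / (4 * μ) := by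
  have hL0 : (0:ℝ) ≤ L := hL.le
  -- x k is in L²
  have hxL2 : ∀ k, MemLp (x k) 2 P := by
    intro k
    induction k with
    | zero => rw [hx0]; exact memLp_const x₀
    | succ k ih =>
      have hxe : x (k+1) = fun ω => x k ω - α • g k ω := funext (hupdate k)
      rw [hxe]
      exact ih.sub ((hL2 k).const_smul α)
  have hdL2 : ∀ k, MemLp (fun ω => x k ω - x₀) 2 P :=
    fun k => (hxL2 k).sub (memLp_const x₀)
  -- gradient along iterates is in L²
  have hgradL2 : ∀ k, MemLp (fun ω => gradient f (x k ω)) 2 P := by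
    intro k
    refine MemLp.of_le (g := fun ω => ‖gradient f x₀‖ + L * ‖x k ω - x₀‖)
      (((memLp_const ‖gradient f x₀‖).add (((hdL2 k).norm).const_mul L)))
      (hLip.continuous.comp_aestronglyMeasurable (hxL2 k).aestronglyMeasurable) ?_
    refine Filter.Eventually.of_forall fun ω => ?_
    have h1 : ‖gradient f (x k ω) - gradient f x₀‖ ≤ L * ‖x k ω - x₀‖ := by
      have h := hLip.dist_le_mul (x k ω) x₀
      rw [dist_eq_norm, dist_eq_norm] at h
      rwa [Real.coe_toNNReal L hL0] at h
    have h2 : ‖gradient f (x k ω)‖ ≤ ‖gradient f x₀‖ + L * ‖x k ω - x₀‖ := by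
      have := norm_sub_norm_le (gradient f (x k ω)) (gradient f x₀)
      linarith
    have h3 : (0:ℝ) ≤ ‖gradient f x₀‖ + L * ‖x k ω - x₀‖ := by positivity
    rwa [Real.norm_of_nonneg h3]
  have hgradsq_int : ∀ k, Integrable (fun ω => ‖gradient f (x k ω)‖^2) P :=
    fun k => ((hgradL2 k).norm).integrable_sq
  have hgsq_int : ∀ k, Integrable (fun ω => ‖g k ω‖^2) P :=
    fun k => ((hL2 k).norm).integrable_sq
  -- f along iterates is integrable
  have hf_int : ∀ k, Integrable (fun ω => f (x k ω)) P := by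
    intro k
    have hmeas : AEStronglyMeasurable (fun ω => f (x k ω)) P :=
      hdiff.continuous.comp_aestronglyMeasurable (hxL2 k).aestronglyMeasurable
    have hnormd : Integrable (fun ω => ‖x k ω - x₀‖) P :=
      ((hdL2 k).norm).integrable one_le_two
    have hnormdsq : Integrable (fun ω => ‖x k ω - x₀‖^2) P :=
      ((hdL2 k).norm).integrable_sq
    refine Integrable.mono' (g := fun ω => (|fstar| + |f x₀|) +
      (‖gradient f x₀‖ * ‖x k ω - x₀‖ + L/2 * ‖x k ω - x₀‖^2))
      ((integrable_const _).add ((hnormd.const_mul _).add (hnormdsq.const_mul _)))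
      hmeas ?_
    refine Filter.Eventually.of_forall fun ω => ?_
    have hup : f (x k ω) ≤ f x₀ + ‖gradient f x₀‖ * ‖x k ω - x₀‖ + L/2 * ‖x k ω - x₀‖^2 := by
      have hd := sgd_descent_lemma hL0 hdiff hLip x₀ (x k ω)
      have hi : inner (𝕜 := ℝ) (gradient f x₀) (x k ω - x₀) ≤
          ‖gradient f x₀‖ * ‖x k ω - x₀‖ := real_inner_le_norm _ _
      linarith
    have hlow : fstar ≤ f (x k ω) := hbelow _
    rw [Real.norm_eq_abs, abs_le]
    constructor
    · have : -(|fstar|) ≤ fstar := neg_abs_le fstar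
      have h3 : (0:ℝ) ≤ ‖gradient f x₀‖ * ‖x k ω - x₀‖ + L/2 * ‖x k ω - x₀‖^2 := by positivity
      have h4 : (0:ℝ) ≤ |f x₀| := abs_nonneg _
      linarith
    · have : f x₀ ≤ |f x₀| := le_abs_self _
      have h4 : (0:ℝ) ≤ |fstar| := abs_nonneg _
      linarith
  have hfs_int : ∀ k, Integrable (fun ω => f (x k ω) - fstar) P :=
    fun k => (hf_int k).sub (integrable_const fstar)
  -- product bound helper
  have hprod_bound : ∀ k, Integrable
      (fun ω => (‖gradient f (x k ω)‖^2 + ‖g k ω‖^2)/2) P := by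
    intro k
    exact ((hgradsq_int k).add (hgsq_int k)).div_const 2
  -- inner product is integrable
  have hinner_int : ∀ k, Integrable
      (fun ω => inner (𝕜 := ℝ) (gradient f (x k ω)) (g k ω)) P := by
    intro k
    refine Integrable.mono' (hprod_bound k)
      (((hLip.continuous.comp_aestronglyMeasurable (hxL2 k).aestronglyMeasurable)).inner
        (hL2 k).aestronglyMeasurable) ?_
    refine Filter.Eventually.of_forall fun ω => ?_
    rw [Real.norm_eq_abs]
    have h1 := abs_real_inner_le_norm (gradient f (x k ω)) (g k ω)
    nlinarith [sq_nonneg (‖gradient f (x k ω)‖ - ‖g k ω‖)]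
  -- expectation of ‖g k‖² is at most C
  have hC2 : ∀ k, ∫ ω, ‖g k ω‖^2 ∂P ≤ C := by
    intro k
    haveI : SigmaFinite (P.trim (ℱ.le k)) := inferInstance
    have h1 : ∫ ω, ‖g k ω‖^2 ∂P = ∫ ω, (P[fun ω' => ‖g k ω'‖^2 | ℱ k]) ω ∂P :=
      (integral_condExp (ℱ.le k)).symm
    rw [h1]
    calc ∫ ω, (P[fun ω' => ‖g k ω'‖^2 | ℱ k]) ω ∂P ≤ ∫ _, C ∂P :=
          integral_mono_ae integrable_condExp (integrable_const C) (hsecond k)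
      _ = C := by simp
  have hC0 : 0 ≤ C :=
    le_trans (integral_nonneg fun ω => by positivity) (hC2 0)
  -- key identity: E[⟨∇f(xₖ), gₖ⟩] = E[‖∇f(xₖ)‖²]
  have hkey : ∀ k, ∫ ω, inner (𝕜 := ℝ) (gradient f (x k ω)) (g k ω) ∂P
      = ∫ ω, ‖gradient f (x k ω)‖^2 ∂P := by
    intro k
    haveI : SigmaFinite (P.trim (ℱ.le k)) := inferInstance
    have hg_int : Integrable (g k) P := (hL2 k).integrable one_le_two
    set T : Fin d → (EuclideanSpace ℝ (Fin d) →L[ℝ] ℝ) := fun i => EuclideanSpace.proj i with hT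
    have hi_sm : ∀ i : Fin d, StronglyMeasurable[ℱ k] (fun ω => gradient f (x k ω) i) := by
      intro i
      exact ((T i).continuous.comp hLip.continuous).comp_stronglyMeasurable (hadapted k).stronglyMeasurable
    have hprod_int : ∀ i : Fin d,
        Integrable (fun ω => gradient f (x k ω) i * g k ω i) P := by
      intro i
      refine Integrable.mono' (hprod_bound k)
        (((hi_sm i).mono (ℱ.le k)).aestronglyMeasurable.mul
          (((T i).continuous.comp_aestronglyMeasurable (hL2 k).aestronglyMeasurable))) ?_
      refine Filter.Eventually.of_forall fun ω => ?_
      rw [Real.norm_eq_abs, abs_mul]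
      have h1 := sgd_coord_abs_le_norm (gradient f (x k ω)) i
      have h2 := sgd_coord_abs_le_norm (g k ω) i
      have := mul_le_mul h1 h2 (abs_nonneg _) (norm_nonneg _)
      nlinarith [sq_nonneg (‖gradient f (x k ω)‖ - ‖g k ω‖), abs_nonneg (gradient f (x k ω) i),
        abs_nonneg (g k ω i)]
    have hsq_int : ∀ i : Fin d,
        Integrable (fun ω => gradient f (x k ω) i * gradient f (x k ω) i) P := by
      intro i
      refine Integrable.mono' (hgradsq_int k)
        ((((hi_sm i).mono (ℱ.le k)).aestronglyMeasurable).mul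
          (((hi_sm i).mono (ℱ.le k)).aestronglyMeasurable)) ?_
      refine Filter.Eventually.of_forall fun ω => ?_
      rw [Real.norm_eq_abs, abs_mul]
      have h1 := sgd_coord_abs_le_norm (gradient f (x k ω)) i
      have := mul_le_mul h1 h1 (abs_nonneg _) (norm_nonneg _)
      nlinarith
    have hgi_int : ∀ i : Fin d, Integrable (fun ω => g k ω i) P := by
      intro i
      have := (T i).integrable_comp hg_int
      simpa [hT] using this
    -- conditional expectation of coordinates
    have hcond_coord : ∀ i : Fin d,
        P[fun ω => g k ω i | ℱ k] =ᵐ[P] fun ω => gradient f (x k ω) i := by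
      intro i
      have h1 := sgd_condexp_clm_comm (ℱ.le k) (T i) hg_int
      have h2 : (fun ω => (T i) ((P[g k|ℱ k]) ω)) =ᵐ[P]
          (fun ω => gradient f (x k ω) i) := by
        filter_upwards [hunbiased k] with ω hω
        simp [hT, hω]
      have h3 : (fun ω => (T i) (g k ω)) = fun ω => g k ω i := by
        funext ω; simp [hT]
      rw [h3] at h1
      exact h1.symm.trans h2
    have hcoord : ∀ i : Fin d, ∫ ω, gradient f (x k ω) i * g k ω i ∂P
        = ∫ ω, gradient f (x k ω) i * gradient f (x k ω) i ∂P := by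
      intro i
      have hmul := condExp_mul_of_stronglyMeasurable_left (m := ℱ k) (μ := P) (hi_sm i)
        (hprod_int i) (hgi_int i)
      have e1 : ∫ ω, gradient f (x k ω) i * g k ω i ∂P
          = ∫ ω, (P[fun ω' => gradient f (x k ω') i * g k ω' i | ℱ k]) ω ∂P :=
        (integral_condExp (ℱ.le k)).symm
      rw [e1]
      have e2 : (P[fun ω' => gradient f (x k ω') i * g k ω' i | ℱ k]) =ᵐ[P]
          fun ω => gradient f (x k ω) i * gradient f (x k ω) i := by
        have hfeq : (fun ω' => gradient f (x k ω') i * g k ω' i)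
            = (fun ω' => gradient f (x k ω') i) * (fun ω' => g k ω' i) := rfl
        rw [hfeq]
        filter_upwards [hmul, hcond_coord i] with ω h1 h2
        rw [h1]
        show gradient f (x k ω) i * (P[fun ω' => g k ω' i|ℱ k]) ω = _
        rw [h2]
      rw [integral_congr_ae e2]
    -- now sum over coordinates
    have hinner_expand : (fun ω => inner (𝕜 := ℝ) (gradient f (x k ω)) (g k ω))
        = fun ω => ∑ i, gradient f (x k ω) i * g k ω i := by
      funext ω; exact sgd_inner_eq_sum _ _
    have hnorm_expand : (fun ω => ‖gradient f (x k ω)‖^2)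
        = fun ω => ∑ i, gradient f (x k ω) i * gradient f (x k ω) i := by
      funext ω; exact sgd_norm_sq_eq_sum _
    rw [hinner_expand, hnorm_expand,
      integral_finset_sum _ (fun i _ => hprod_int i),
      integral_finset_sum _ (fun i _ => hsq_int i)]
    exact Finset.sum_congr rfl fun i _ => hcoord i
  -- the one-step recursion
  have hrec : ∀ k, ∫ ω, (f (x (k+1) ω) - fstar) ∂P ≤
      (1 - 2*μ*α) * ∫ ω, (f (x k ω) - fstar) ∂P + L * α^2 * C / 2 := by
    intro k
    have hpt : ∀ ω, f (x (k+1) ω) - fstar ≤ (f (x k ω) - fstar)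
        - α * inner (𝕜 := ℝ) (gradient f (x k ω)) (g k ω) + L * α^2 / 2 * ‖g k ω‖^2 := by
      intro ω
      have hd := sgd_descent_lemma hL0 hdiff hLip (x k ω) (x (k+1) ω)
      have hsub : x (k+1) ω - x k ω = -(α • g k ω) := by
        rw [hupdate k ω]; exact sub_sub_cancel_left _ _
      rw [hsub] at hd
      have hi : inner (𝕜 := ℝ) (gradient f (x k ω)) (-(α • g k ω))
          = -(α * inner (𝕜 := ℝ) (gradient f (x k ω)) (g k ω)) := by
        rw [inner_neg_right, real_inner_smul_right]
      have hn : ‖-(α • g k ω)‖^2 = α^2 * ‖g k ω‖^2 := by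
        rw [norm_neg, norm_smul, mul_pow, Real.norm_eq_abs, sq_abs]
      rw [hi, hn] at hd
      nlinarith [hd]
    have hrhs_int : Integrable (fun ω => (f (x k ω) - fstar)
        - α * inner (𝕜 := ℝ) (gradient f (x k ω)) (g k ω)
        + L * α^2 / 2 * ‖g k ω‖^2) P :=
      ((hfs_int k).sub ((hinner_int k).const_mul α)).add ((hgsq_int k).const_mul _)
    have h1 : ∫ ω, (f (x (k+1) ω) - fstar) ∂P ≤ ∫ ω, ((f (x k ω) - fstar)
        - α * inner (𝕜 := ℝ) (gradient f (x k ω)) (g k ω)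
        + L * α^2 / 2 * ‖g k ω‖^2) ∂P :=
      integral_mono (hfs_int (k+1)) hrhs_int hpt
    have e1 : ∫ ω, ((f (x k ω) - fstar)
        - α * inner (𝕜 := ℝ) (gradient f (x k ω)) (g k ω)
        + L * α^2 / 2 * ‖g k ω‖^2) ∂P
        = (∫ ω, ((f (x k ω) - fstar)
            - α * inner (𝕜 := ℝ) (gradient f (x k ω)) (g k ω)) ∂P)
          + ∫ ω, (L * α^2 / 2 * ‖g k ω‖^2) ∂P :=
      integral_add ((hfs_int k).sub ((hinner_int k).const_mul α))
        ((hgsq_int k).const_mul _)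
    have e2 : ∫ ω, ((f (x k ω) - fstar)
        - α * inner (𝕜 := ℝ) (gradient f (x k ω)) (g k ω)) ∂P
        = (∫ ω, (f (x k ω) - fstar) ∂P)
          - ∫ ω, (α * inner (𝕜 := ℝ) (gradient f (x k ω)) (g k ω)) ∂P :=
      integral_sub (hfs_int k) ((hinner_int k).const_mul α)
    have e3 : ∫ ω, (α * inner (𝕜 := ℝ) (gradient f (x k ω)) (g k ω)) ∂P
        = α * ∫ ω, inner (𝕜 := ℝ) (gradient f (x k ω)) (g k ω) ∂P := by
      simpa [smul_eq_mul] using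
        integral_smul (μ := P) α (fun ω => inner (𝕜 := ℝ) (gradient f (x k ω)) (g k ω))
    have e4 : ∫ ω, (L * α^2 / 2 * ‖g k ω‖^2) ∂P
        = L * α^2 / 2 * ∫ ω, ‖g k ω‖^2 ∂P := by
      exact integral_const_mul (μ := P) (L * α^2 / 2) (fun ω => ‖g k ω‖^2)
    have h2 : ∫ ω, ((f (x k ω) - fstar)
        - α * inner (𝕜 := ℝ) (gradient f (x k ω)) (g k ω)
        + L * α^2 / 2 * ‖g k ω‖^2) ∂P
        = ∫ ω, (f (x k ω) - fstar) ∂P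
          - α * ∫ ω, inner (𝕜 := ℝ) (gradient f (x k ω)) (g k ω) ∂P
          + L * α^2 / 2 * ∫ ω, ‖g k ω‖^2 ∂P := by
      rw [e1, e2, e3, e4]
    have h3 : 2 * μ * ∫ ω, (f (x k ω) - fstar) ∂P ≤ ∫ ω, ‖gradient f (x k ω)‖^2 ∂P := by
      have hp : ∀ ω, 2 * μ * (f (x k ω) - fstar) ≤ ‖gradient f (x k ω)‖^2 := by
        intro ω
        have := hPL (x k ω)
        linarith
      have := integral_mono ((hfs_int k).const_mul (2*μ)) (hgradsq_int k) hp
      have e5 : ∫ ω, (2 * μ * (f (x k ω) - fstar)) ∂P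
          = 2 * μ * ∫ ω, (f (x k ω) - fstar) ∂P := by
        simpa [smul_eq_mul] using
          integral_smul (μ := P) (2*μ) (fun ω => f (x k ω) - fstar)
      rw [← e5]
      exact this
    have h4 := hkey k
    have h5 := hC2 k
    have hα2nn : (0:ℝ) ≤ L * α^2 / 2 := by positivity
    rw [h2, h4] at h1
    have h6 : L * α^2 / 2 * ∫ ω, ‖g k ω‖^2 ∂P ≤ L * α^2 / 2 * C :=
      mul_le_mul_of_nonneg_left h5 hα2nn
    have h7 : - α * ∫ ω, ‖gradient f (x k ω)‖^2 ∂P ≤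
        - α * (2 * μ * ∫ ω, (f (x k ω) - fstar) ∂P) := by
      have := mul_le_mul_of_nonneg_left h3 hα0.le
      linarith
    nlinarith [h1, h6, h7]
  -- conclusion by induction
  have hr0 : 0 ≤ 1 - 2*μ*α := by
    have h2μ : (0:ℝ) < 2*μ := by linarith
    have := (lt_div_iff₀ h2μ).mp hα1
    nlinarith
  have hB0 : 0 ≤ L * α * C / (4 * μ) := by positivity
  have hBeq : (1 - 2*μ*α) * (L * α * C / (4 * μ)) + L * α^2 * C / 2 = L * α * C / (4 * μ) := by
    field_simp
    ring
  have hE0 : ∫ ω, (f (x 0 ω) - fstar) ∂P = f x₀ - fstar := by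
    rw [hx0]; simp
  intro k
  induction k with
  | zero => rw [hE0]; simp; linarith
  | succ k ih =>
    calc ∫ ω, (f (x (k+1) ω) - fstar) ∂P
        ≤ (1 - 2*μ*α) * ∫ ω, (f (x k ω) - fstar) ∂P + L * α^2 * C / 2 := hrec k
      _ ≤ (1 - 2*μ*α) * ((1 - 2*μ*α)^k * (f x₀ - fstar) + L * α * C / (4 * μ))
            + L * α^2 * C / 2 := by
          have := mul_le_mul_of_nonneg_left ih hr0
          linarith
      _ = (1 - 2*μ*α)^(k+1) * (f x₀ - fstar)
            + ((1 - 2*μ*α) * (L * α * C / (4 * μ)) + L * α^2 * C / 2) := by ring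
      _ = (1 - 2*μ*α)^(k+1) * (f x₀ - fstar) + L * α * C / (4 * μ) := by rw [hBeq]
      _ = (1 - 2 * μ * α) ^ (k+1) * (f x₀ - fstar) + L * α * C / (4 * μ) := by ring
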